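/- arXiv:1709.10334 — 5 statements merged into one kernel-verified Lean document; each statement's English description precedes it below -/
import Mathlib

section
/- Let F be a field, n ≥ 1, and let (X,Y) and (X',Y') be pairs of n×n matrices over F. Then (X,Y) and (X',Y') are similar (i.e., there is a nonsingular n×n matrix S with S^{-1}XS = X' and S^{-1}YS = Y') if and only if the pairs of 5n×5n matrices (J, K_{X,Y}) and (J, K_{X',Y'}) are similar (i.e., there is a nonsingular 5n×5n matrix R with R^{-1}JR = J and R^{-1}K_{X,Y}R = K_{X',Y'}). -/
/-- The `5n × 5n` matrix `J`, partitioned into `n × n` blocks, with identity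
blocks in block positions `(1,2)`, `(2,3)`, `(3,4)` (1-indexed) and zero blocks
elsewhere.  Rows and columns are indexed by `Fin 5 × Fin n`, the first
component being the block index. -/
def Jmat (F : Type*) [Field F] (n : ℕ) :
    Matrix (Fin 5 × Fin n) (Fin 5 × Fin n) F :=
  Matrix.of fun p q =>
    if (p.1 = 0 ∧ q.1 = 1) ∨ (p.1 = 1 ∧ q.1 = 2) ∨ (p.1 = 2 ∧ q.1 = 3) then
      (1 : Matrix (Fin n) (Fin n) F) p.2 q.2
    else 0

/-- The `5n × 5n` matrix `K_{X,Y}`, partitioned into `n × n` blocks, with the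
block `X` in block positions `(1,3)` and `(2,4)`, the block `Y` in position
`(1,5)`, the identity block in position `(5,4)`, and zero blocks elsewhere. -/
def Kmat {F : Type*} [Field F] {n : ℕ} (X Y : Matrix (Fin n) (Fin n) F) :
    Matrix (Fin 5 × Fin n) (Fin 5 × Fin n) F :=
  Matrix.of fun p q =>
    if (p.1 = 0 ∧ q.1 = 2) ∨ (p.1 = 1 ∧ q.1 = 3) then X p.2 q.2
    else if p.1 = 0 ∧ q.1 = 4 then Y p.2 q.2
    else if p.1 = 4 ∧ q.1 = 3 then (1 : Matrix (Fin n) (Fin n) F) p.2 q.2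
    else 0

/-!
If `S` intertwines `(X, Y)` with `(X', Y')`, then the block-diagonal matrix `diag(S, …, S)`
intertwines `(J, K_{X,Y})` with `(J, K_{X',Y'})`. Conversely, in block form (block indices as in
the paper, one more than the `Fin 5` indices below) a matrix `R` commuting with `J` has
equal diagonal blocks `A := R₁₁ = R₂₂ = R₃₃ = R₄₄` and fourth block row `(0, 0, 0, A, 0)`. Comparing
the blocks `(2,4)`, `(5,4)` and `(1,5)` of `K_{X,Y} R = R K_{X',Y'}` then gives `X A = A X'` and
`Y A = A Y'`, and since `R` is invertible its fourth block row shows that `A` has a right inverse.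
-/

open Matrix

section Blocks

def blockJ (A : Type*) [Semiring A] : Matrix (Fin 5) (Fin 5) A :=
  !![0, 1, 0, 0, 0;
     0, 0, 1, 0, 0;
     0, 0, 0, 1, 0;
     0, 0, 0, 0, 0;
     0, 0, 0, 0, 0]

variable {A : Type*} [Semiring A]

def blockK (x y : A) : Matrix (Fin 5) (Fin 5) A :=
  !![0, 0, x, 0, y;
     0, 0, 0, x, 0;
     0, 0, 0, 0, 0;
     0, 0, 0, 0, 0;
     0, 0, 0, 1, 0]

theorem Matrix.mul_scalar_eq_scalar_mul {m : Type*} [Fintype m] [DecidableEq m]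
    {M N : Matrix m m A} {s : A} (h : ∀ i j, M i j * s = s * N i j) :
    M * scalar m s = scalar m s * N := by
  ext i j
  simp only [scalar_apply, mul_diagonal, diagonal_mul, h]

theorem Matrix.exists_apply_mul_eq_one_of_isUnit_of_row {m : Type*} [Fintype m] [DecidableEq m]
    {R : Matrix m m A} (hR : IsUnit R) {i : m} (hrow : ∀ j ≠ i, R i j = 0) :
    ∃ b, R i i * b = 1 := by
  obtain ⟨u, rfl⟩ := hR
  refine ⟨(↑u⁻¹ : Matrix m m A) i i, ?_⟩
  have h := congr_fun₂ u.mul_inv i i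
  rwa [mul_apply, Finset.sum_eq_single i (fun j _ hj => by rw [hrow j hj, zero_mul])
    (by simp), one_apply_eq] at h

theorem blockJ_commute_scalar (s : A) : Commute (blockJ A) (scalar (Fin 5) s) :=
  mul_scalar_eq_scalar_mul fun i j => by fin_cases i <;> fin_cases j <;> simp [blockJ]

theorem blockK_mul_scalar {x y x' y' s : A} (hx : x * s = s * x') (hy : y * s = s * y') :
    blockK x y * scalar (Fin 5) s = scalar (Fin 5) s * blockK x' y' :=
  mul_scalar_eq_scalar_mul fun i j => by fin_cases i <;> fin_cases j <;> simp [blockK, hx, hy]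

variable {R : Matrix (Fin 5) (Fin 5) A}

theorem apply_three_eq_zero_of_commute_blockJ (h : Commute (blockJ A) R) :
    ∀ j ≠ 3, R 3 j = 0 := by
  have e (i j : Fin 5) := congr_fun₂ h.eq i j
  intro j hj
  fin_cases j
  · simpa [blockJ, mul_apply, Fin.sum_univ_five] using (e 3 1).symm
  · simpa [blockJ, mul_apply, Fin.sum_univ_five] using (e 3 2).symm
  · simpa [blockJ, mul_apply, Fin.sum_univ_five] using (e 3 3).symm
  · exact absurd rfl hj
  · simpa [blockJ, mul_apply, Fin.sum_univ_five] using e 2 4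

theorem apply_three_three_of_commute_blockJ (h : Commute (blockJ A) R) : R 3 3 = R 0 0 := by
  have e (i j : Fin 5) := congr_fun₂ h.eq i j
  calc R 3 3 = R 2 2 := by simpa [blockJ, mul_apply, Fin.sum_univ_five] using e 2 3
    _ = R 1 1 := by simpa [blockJ, mul_apply, Fin.sum_univ_five] using e 1 2
    _ = R 0 0 := by simpa [blockJ, mul_apply, Fin.sum_univ_five] using e 0 1

theorem intertwine_apply_zero_zero_of_commute_blockJ {x y x' y' : A} (hJ : Commute (blockJ A) R)
    (hK : blockK x y * R = R * blockK x' y') :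
    x * R 0 0 = R 0 0 * x' ∧ y * R 0 0 = R 0 0 * y' := by
  have eJ (i j : Fin 5) := congr_fun₂ hJ.eq i j
  have eK (i j : Fin 5) := congr_fun₂ hK i j
  have h33 := apply_three_three_of_commute_blockJ hJ
  have h14 : R 1 4 = 0 := by simpa [blockJ, mul_apply, Fin.sum_univ_five] using eJ 0 4
  have h24 : R 2 4 = 0 := by simpa [blockJ, mul_apply, Fin.sum_univ_five] using eJ 1 4
  have h41 : R 4 1 = 0 := by simpa [blockJ, mul_apply, Fin.sum_univ_five] using (eJ 4 2).symm
  have h11 : R 1 1 = R 0 0 := by simpa [blockJ, mul_apply, Fin.sum_univ_five] using eJ 0 1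
  have h44 : R 4 4 = R 0 0 := by
    simpa [blockK, mul_apply, Fin.sum_univ_five, h41, h33] using (eK 4 3).symm
  constructor
  · simpa [blockK, mul_apply, Fin.sum_univ_five, h33, h11, h14] using eK 1 3
  · simpa [blockK, mul_apply, Fin.sum_univ_five, h24, h44] using eK 0 4

end Blocks

section Similarity

variable {m K : Type*} [Fintype m] [DecidableEq m] [CommRing K]

theorem Matrix.inv_mul_mul_eq_iff {R M N : Matrix m m K} (hR : IsUnit R) :
    R⁻¹ * M * R = N ↔ M * R = R * N := by
  have := hR.invertible
  rw [mul_assoc, inv_mul_eq_iff_eq_mul_of_invertible]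

theorem Matrix.inv_mul_mul_compRingEquiv_eq_iff {n : Type*} [Fintype n] [DecidableEq n]
    {R M N : Matrix m m (Matrix n n K)} (hR : IsUnit (compRingEquiv m n K R)) :
    (compRingEquiv m n K R)⁻¹ * compRingEquiv m n K M * compRingEquiv m n K R =
      compRingEquiv m n K N ↔ M * R = R * N := by
  rw [inv_mul_mul_eq_iff hR, ← map_mul, ← map_mul, (compRingEquiv m n K).injective.eq_iff]

end Similarity

theorem compRingEquiv_blockJ {F : Type*} [Field F] {n : ℕ} :
    compRingEquiv (Fin 5) (Fin n) F (blockJ (Matrix (Fin n) (Fin n) F)) = Jmat F n := by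
  ext ⟨i, p⟩ ⟨j, q⟩
  fin_cases i <;> fin_cases j <;> rfl

theorem compRingEquiv_blockK {F : Type*} [Field F] {n : ℕ} (X Y : Matrix (Fin n) (Fin n) F) :
    compRingEquiv (Fin 5) (Fin n) F (blockK X Y) = Kmat X Y := by
  ext ⟨i, p⟩ ⟨j, q⟩
  fin_cases i <;> fin_cases j <;> rfl

theorem similar_iff_JK_similar_general (F : Type*) [Field F] (n : ℕ)
    (X Y X' Y' : Matrix (Fin n) (Fin n) F) :
    (∃ S : Matrix (Fin n) (Fin n) F, IsUnit S ∧
        S⁻¹ * X * S = X' ∧ S⁻¹ * Y * S = Y') ↔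
    (∃ R : Matrix (Fin 5 × Fin n) (Fin 5 × Fin n) F, IsUnit R ∧
        R⁻¹ * Jmat F n * R = Jmat F n ∧ R⁻¹ * Kmat X Y * R = Kmat X' Y') := by
  let e := compRingEquiv (Fin 5) (Fin n) F
  constructor
  · rintro ⟨S, hS, hX, hY⟩
    rw [inv_mul_mul_eq_iff hS] at hX hY
    have hD : IsUnit (e (scalar (Fin 5) S)) := (hS.map _).map e
    refine ⟨_, hD, ?_, ?_⟩
    · rw [← compRingEquiv_blockJ, inv_mul_mul_compRingEquiv_eq_iff hD]
      exact blockJ_commute_scalar S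
    · rw [← compRingEquiv_blockK, ← compRingEquiv_blockK, inv_mul_mul_compRingEquiv_eq_iff hD]
      exact blockK_mul_scalar hX hY
  · rintro ⟨R, hR, hJ, hK⟩
    obtain ⟨R, rfl⟩ := e.surjective R
    rw [← compRingEquiv_blockJ, inv_mul_mul_compRingEquiv_eq_iff hR] at hJ
    rw [← compRingEquiv_blockK, ← compRingEquiv_blockK,
      inv_mul_mul_compRingEquiv_eq_iff hR] at hK
    obtain ⟨B, hB⟩ := exists_apply_mul_eq_one_of_isUnit_of_row (by simpa using hR.map e.symm)
      (apply_three_eq_zero_of_commute_blockJ hJ)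
    have hA : IsUnit (R 0 0) := .of_mul_eq_one B (apply_three_three_of_commute_blockJ hJ ▸ hB)
    obtain ⟨hX, hY⟩ := intertwine_apply_zero_zero_of_commute_blockJ hJ hK
    exact ⟨R 0 0, hA, (inv_mul_mul_eq_iff hA).2 hX, (inv_mul_mul_eq_iff hA).2 hY⟩

/-- `(X, Y)` and `(X', Y')` are similar (there is a nonsingular matrix `S`
with `S⁻¹XS = X'` and `S⁻¹YS = Y'`) if and only if the pairs of commuting
nilpotent `5n × 5n` matrices `(J, K_{X,Y})` and `(J, K_{X',Y'})` are similar. -/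
theorem similar_iff_JK_similar (F : Type*) [Field F] (n : ℕ) (hn : 1 ≤ n)
    (X Y X' Y' : Matrix (Fin n) (Fin n) F) :
    (∃ S : Matrix (Fin n) (Fin n) F, IsUnit S ∧
        S⁻¹ * X * S = X' ∧ S⁻¹ * Y * S = Y') ↔
    (∃ R : Matrix (Fin 5 × Fin n) (Fin 5 × Fin n) F, IsUnit R ∧
        R⁻¹ * Jmat F n * R = Jmat F n ∧ R⁻¹ * Kmat X Y * R = Kmat X' Y') :=
  similar_iff_JK_similar_general F n X Y X' Y'
end

section
/- Let F be a field, n ≥ 1, and let R be a 5n×5n matrix over F that commutes with J. Then, partitioning R into n×n blocks R = [R_{ij}]_{i,j=1}^5, there exist n×n matrices C, C_1, C_2, C_3, D, E, F_0 such that R_{11} = R_{22} = R_{33} = R_{44} = C, R_{12} = R_{23} = R_{34} = C_1, R_{13} = R_{24} = C_2, R_{14} = C_3, R_{15} = D, R_{54} = E, R_{55} = F_0, and all remaining blocks of R are zero. -/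
/-- The `n × n` block of a matrix commuting with `J` in block position
`(i+1, j+1)` (so `(0,0)`-indexed here): `C` on the first four diagonal
positions, `C₁` on the first superdiagonal of the 4×4 Jordan-like part,
`C₂` on the second, `C₃` in position `(1,4)`, `D` in position `(1,5)`,
`E` in position `(5,4)`, `F₀` in position `(5,5)`, and `0` elsewhere. -/
def Rblk {F : Type*} [Field F] {n : ℕ}
    (C C₁ C₂ C₃ D E F₀ : Matrix (Fin n) (Fin n) F) :
    Fin 5 → Fin 5 → Matrix (Fin n) (Fin n) F := fun i j =>
  if (i = 0 ∧ j = 0) ∨ (i = 1 ∧ j = 1) ∨ (i = 2 ∧ j = 2) ∨ (i = 3 ∧ j = 3) then C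
  else if (i = 0 ∧ j = 1) ∨ (i = 1 ∧ j = 2) ∨ (i = 2 ∧ j = 3) then C₁
  else if (i = 0 ∧ j = 2) ∨ (i = 1 ∧ j = 3) then C₂
  else if i = 0 ∧ j = 3 then C₃
  else if i = 0 ∧ j = 4 then D
  else if i = 4 ∧ j = 3 then E
  else if i = 4 ∧ j = 4 then F₀
  else 0

section

variable {F : Type*} [Field F] {n : ℕ}

theorem mul_Jmat_apply {ι : Type*} (R : Matrix ι (Fin 5 × Fin n) F) (x : ι) (j : Fin 5)
    (l : Fin n) :
    (R * Jmat F n) x (j, l) = if j = 1 ∨ j = 2 ∨ j = 3 then R x (j - 1, l) else 0 := by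
  fin_cases j <;> simp [Matrix.mul_apply, Jmat, Fintype.sum_prod_type, Matrix.one_apply]

theorem Jmat_mul_apply {κ : Type*} (R : Matrix (Fin 5 × Fin n) κ F) (i : Fin 5) (k : Fin n)
    (y : κ) :
    (Jmat F n * R) (i, k) y = if i = 0 ∨ i = 1 ∨ i = 2 then R (i + 1, k) y else 0 := by
  fin_cases i <;> simp [Matrix.mul_apply, Jmat, Fintype.sum_prod_type, Matrix.one_apply]

theorem apply_sub_one_eq_apply_add_one_of_commute_Jmat
    {R : Matrix (Fin 5 × Fin n) (Fin 5 × Fin n) F} (hR : R * Jmat F n = Jmat F n * R)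
    (i j : Fin 5) (k l : Fin n) :
    (if j = 1 ∨ j = 2 ∨ j = 3 then R (i, k) (j - 1, l) else 0) =
      if i = 0 ∨ i = 1 ∨ i = 2 then R (i + 1, k) (j, l) else 0 := by
  rw [← mul_Jmat_apply, ← Jmat_mul_apply, hR]

end

theorem commutes_with_Jmat_block_form_general (F : Type*) [Field F] (n : ℕ)
    (R : Matrix (Fin 5 × Fin n) (Fin 5 × Fin n) F)
    (hR : R * Jmat F n = Jmat F n * R) :
    ∃ C C₁ C₂ C₃ D E F₀ : Matrix (Fin n) (Fin n) F,
      ∀ (i j : Fin 5) (k l : Fin n),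
        R (i, k) (j, l) = Rblk C C₁ C₂ C₃ D E F₀ i j k l := by
  let blk (i j : Fin 5) : Matrix (Fin n) (Fin n) F := Matrix.of fun k l => R (i, k) (j, l)
  refine ⟨blk 0 0, blk 0 1, blk 0 2, blk 0 3, blk 0 4, blk 4 3, blk 4 4, fun i j k l => ?_⟩
  have rel := fun a b => apply_sub_one_eq_apply_add_one_of_commute_Jmat hR a b k l
  simp only [Fin.isValue, Fin.forall_fin_succ, zero_ne_one, Fin.reduceEq, or_self, ↓reduceIte,
    right_eq_ite_iff, Fin.succ_zero_eq_one, or_false, sub_self, Fin.succ_one_eq_two, or_true,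
    Fin.reduceSub, Fin.reduceSucc, IsEmpty.forall_iff, and_true, zero_add, forall_const,
    Fin.succ_ne_zero, false_or, Fin.reduceAdd, true_and] at rel
  fin_cases i <;> fin_cases j <;> simp [Rblk, blk] <;> grind

/-- Any `5n × 5n` matrix `R` commuting with `J` has the block form
`[[C,C₁,C₂,C₃,D],[0,C,C₁,C₂,0],[0,0,C,C₁,0],[0,0,0,C,0],[0,0,0,E,F₀]]`. -/
theorem commutes_with_Jmat_block_form (F : Type*) [Field F] (n : ℕ) (hn : 1 ≤ n)
    (R : Matrix (Fin 5 × Fin n) (Fin 5 × Fin n) F)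
    (hR : R * Jmat F n = Jmat F n * R) :
    ∃ C C₁ C₂ C₃ D E F₀ : Matrix (Fin n) (Fin n) F,
      ∀ (i j : Fin 5) (k l : Fin n),
        R (i, k) (j, l) = Rblk C C₁ C₂ C₃ D E F₀ i j k l :=
  commutes_with_Jmat_block_form_general F n R hR
end

section
/- Let F be a field, λ ∈ F with λ ≠ 0, m ≥ 1, let A, B be m×m matrices over F, and let α, β ∈ F with β ≠ 0. Then rank(αM_1(A) + βM_2(B)) ≥ 4m+4. -/
/-!
Two principal submatrices of `α • M1 A + β • M2 l B` are diagonal: on the first two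
blocks with entries `α, β`, of rank `5m+5` when `α ≠ 0`, and on the middle two blocks with
entries `β, α + βλ`, of rank `4m+4` when `α = 0`.
-/

/-- Index type for the block-diagonal `(7m+6) × (7m+6)` matrices
`M₁(A) = I_{2m+2} ⊕ 0_{3m+3} ⊕ I_{m+1} ⊕ A` and
`M₂(B) = 0_{2m+2} ⊕ I_{3m+3} ⊕ λI_{m+1} ⊕ B`. -/
abbrev MIdx (m : ℕ) : Type := Fin (2*m+2) ⊕ (Fin (3*m+3) ⊕ (Fin (m+1) ⊕ Fin m))

/-- `M₁(A) := I_{2m+2} ⊕ 0_{3m+3} ⊕ I_{m+1} ⊕ A`, a `(7m+6) × (7m+6)` matrix. -/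
def M1 {F : Type*} [Field F] {m : ℕ} (A : Matrix (Fin m) (Fin m) F) :
    Matrix (MIdx m) (MIdx m) F :=
  Matrix.fromBlocks 1 0 0
    (Matrix.fromBlocks 0 0 0
      (Matrix.fromBlocks 1 0 0 A))

/-- `M₂(B) := 0_{2m+2} ⊕ I_{3m+3} ⊕ λI_{m+1} ⊕ B`, a `(7m+6) × (7m+6)` matrix. -/
def M2 {F : Type*} [Field F] {m : ℕ} (l : F) (B : Matrix (Fin m) (Fin m) F) :
    Matrix (MIdx m) (MIdx m) F :=
  Matrix.fromBlocks 0 0 0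
    (Matrix.fromBlocks 1 0 0
      (Matrix.fromBlocks (l • (1 : Matrix (Fin (m+1)) (Fin (m+1)) F)) 0 0 B))

open Matrix

lemma Matrix.card_le_rank_of_submatrix_eq_diagonal {K m n ι : Type*} [Field K] [Fintype n]
    [Fintype ι] [DecidableEq ι] (M : Matrix m n K) (r : ι → m) (c : ι → n) {w : ι → K}
    (hw : ∀ i, w i ≠ 0) (h : M.submatrix r c = diagonal w) : Fintype.card ι ≤ M.rank := by
  classical
  calc Fintype.card ι = (diagonal w).rank := by
        rw [rank_diagonal]
        exact (Fintype.card_congr (Equiv.subtypeUnivEquiv hw)).symm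
    _ = (M.submatrix r c).rank := by rw [h]
    _ ≤ M.rank := rank_submatrix_le M r c

section Blocks

variable {F : Type*} [Field F] {m : ℕ} (l α β : F) (A B : Matrix (Fin m) (Fin m) F)

lemma smul_M1_add_smul_M2_submatrix_first_two_blocks :
    (α • M1 A + β • M2 l B).submatrix (Sum.map id Sum.inl) (Sum.map id Sum.inl) =
      diagonal (Sum.elim (fun _ : Fin (2*m+2) => α) (fun _ : Fin (3*m+3) => β)) := by
  ext (i | i) (j | j) <;> simp [M1, M2, diagonal_apply, one_apply]

lemma smul_M1_add_smul_M2_submatrix_middle_two_blocks :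
    (α • M1 A + β • M2 l B).submatrix (Sum.inr ∘ Sum.map id Sum.inl)
        (Sum.inr ∘ Sum.map id Sum.inl) =
      diagonal (Sum.elim (fun _ : Fin (3*m+3) => β) (fun _ : Fin (m+1) => α + β * l)) := by
  ext (i | i) (j | j) <;> simp [M1, M2, diagonal_apply, one_apply, ite_add_ite]

end Blocks

theorem rank_smul_M1_add_smul_M2_ge_general (F : Type*) [Field F] (l : F) (hl : l ≠ 0)
    (m : ℕ) (A B : Matrix (Fin m) (Fin m) F)
    (α β : F) (hβ : β ≠ 0) :
    4*m+4 ≤ (α • M1 A + β • M2 l B).rank := by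
  by_cases hα : α = 0
  · have h := (α • M1 A + β • M2 l B).card_le_rank_of_submatrix_eq_diagonal _ _
      (by rintro (i | i) <;> simp [hα, hβ, hl])
      (smul_M1_add_smul_M2_submatrix_middle_two_blocks l α β A B)
    simp only [Fintype.card_sum, Fintype.card_fin] at h
    omega
  · have h := (α • M1 A + β • M2 l B).card_le_rank_of_submatrix_eq_diagonal _ _
      (by rintro (i | i) <;> simp [hα, hβ])
      (smul_M1_add_smul_M2_submatrix_first_two_blocks l α β A B)
    simp only [Fintype.card_sum, Fintype.card_fin] at h
    omega

/-- For any field `F`, nonzero `λ ∈ F`, `m ≥ 1`, `m × m` matrices `A, B`,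
and `α, β ∈ F` with `β ≠ 0`, the rank of `αM₁(A) + βM₂(B)` is at least `4m+4`. -/
theorem rank_smul_M1_add_smul_M2_ge (F : Type*) [Field F] (l : F) (hl : l ≠ 0)
    (m : ℕ) (hm : 1 ≤ m) (A B : Matrix (Fin m) (Fin m) F)
    (α β : F) (hβ : β ≠ 0) :
    4*m+4 ≤ (α • M1 A + β • M2 l B).rank :=
  rank_smul_M1_add_smul_M2_ge_general F l hl m A B α β hβ
end

section
/- Let F be a field, λ ∈ F with λ ≠ 0, m ≥ 1, and let (A,B) and (A',B') be pairs of m×m matrices over F. Then (A,B) and (A',B') are similar (i.e., there is a nonsingular m×m matrix S with S^{-1}AS = A' and S^{-1}BS = B') if and only if the pairs of (7m+6)×(7m+6) matrices (M_1(A), M_2(B)) and (M_1(A'), M_2(B')) are weakly similar. -/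
/-- Two pairs `(A, B)` and `(A', B')` of square matrices of the same size are
*weakly similar* if there are a nonsingular matrix `S` and a nonsingular
`2 × 2` matrix `[[α, β], [γ, δ]]` with `S⁻¹(αA + βB)S = A'` and
`S⁻¹(γA + δB)S = B'`. -/
def WeaklySimilar {F : Type*} [Field F] {N : Type*} [Fintype N] [DecidableEq N]
    (A B A' B' : Matrix N N F) : Prop :=
  ∃ (S : Matrix N N F) (α β γ δ : F),
    IsUnit S ∧ IsUnit !![α, β; γ, δ] ∧
    S⁻¹ * (α • A + β • B) * S = A' ∧ S⁻¹ * (γ • A + δ • B) * S = B'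

/-! If `S⁻¹ (α M₁(A) + β M₂(B)) S = M₁(A')`, both sides have the same eigenvalues with
multiplicity. The pencil `x M₁(A) + y M₂(B)` has the eigenvalues `x`, `y`, `x + λy` with
multiplicities `2m+2`, `3m+3`, `m+1`, and `m` more from `xA + yB`; comparing multiplicities
forces `(α, β) = (1, 0)`, and likewise `(γ, δ) = (0, 1)`. So the pairs `(M₁, M₂)` are
simultaneously similar, and the scalar blocks cancel one index at a time: an intertwiner with
invertible top-left block induces, through its Schur complement, an intertwiner of the remaining
blocks, and when that block is `1 × 1` a unipotent block matrix commuting with both pairs makes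
it nonzero. -/

open Matrix Polynomial

namespace Matrix

section SimultaneousSimilarity

variable {R : Type*} [CommRing R] {k n o : Type*} [Fintype k] [Fintype n] [Fintype o]

def SimultaneouslySimilar [DecidableEq n] (A B A' B' : Matrix n n R) : Prop :=
  ∃ S : Matrix n n R, IsUnit S ∧ A * S = S * A' ∧ B * S = S * B'

variable [DecidableEq n]

theorem inv_mul_mul_eq_iff_s9 {S X X' : Matrix n n R} (hS : IsUnit S) :
    S⁻¹ * X * S = X' ↔ X * S = S * X' := by
  have := hS.invertible
  rw [Matrix.mul_assoc, inv_mul_eq_iff_eq_mul_of_invertible]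

theorem inv_mul_eq_mul_inv_of_mul_eq {S X X' : Matrix n n R} (hS : IsUnit S)
    (h : X * S = S * X') : S⁻¹ * X = X' * S⁻¹ := by
  have := hS.invertible
  rw [inv_mul_eq_iff_eq_mul_of_invertible, ← Matrix.mul_assoc,
    (mul_inv_eq_iff_eq_mul_of_invertible S _ _).mpr h.symm]

theorem simultaneouslySimilar_iff {A B A' B' : Matrix n n R} :
    SimultaneouslySimilar A B A' B' ↔
      ∃ S : Matrix n n R, IsUnit S ∧ S⁻¹ * A * S = A' ∧ S⁻¹ * B * S = B' := by
  refine exists_congr fun S => and_congr_right fun hS => ?_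
  rw [inv_mul_mul_eq_iff_s9 hS, inv_mul_mul_eq_iff_s9 hS]

namespace SimultaneouslySimilar

theorem refl (A B : Matrix n n R) : SimultaneouslySimilar A B A B :=
  ⟨1, isUnit_one, by simp, by simp⟩

theorem fromBlocks [DecidableEq k] {A B A' B' : Matrix k k R} {C D C' D' : Matrix n n R}
    (h₁ : SimultaneouslySimilar A B A' B') (h₂ : SimultaneouslySimilar C D C' D') :
    SimultaneouslySimilar (Matrix.fromBlocks A 0 0 C) (Matrix.fromBlocks B 0 0 D)
      (Matrix.fromBlocks A' 0 0 C') (Matrix.fromBlocks B' 0 0 D') := by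
  obtain ⟨S₁, hS₁, hA, hB⟩ := h₁
  obtain ⟨S₂, hS₂, hC, hD⟩ := h₂
  refine ⟨Matrix.fromBlocks S₁ 0 0 S₂, ?_, ?_, ?_⟩
  · rw [isUnit_iff_isUnit_det, det_fromBlocks_zero₂₁]
    exact ((isUnit_iff_isUnit_det _).mp hS₁).mul ((isUnit_iff_isUnit_det _).mp hS₂)
  all_goals simp [fromBlocks_multiply, *]

theorem reindex [DecidableEq o] (e : n ≃ o) {A B A' B' : Matrix n n R}
    (h : SimultaneouslySimilar A B A' B') :
    SimultaneouslySimilar (reindex e e A) (reindex e e B) (reindex e e A') (reindex e e B') := by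
  obtain ⟨S, hS, hA, hB⟩ := h
  let f := reindexAlgEquiv R R e
  refine ⟨f S, hS.map f, ?_, ?_⟩
  · simpa [f, map_mul] using congrArg f hA
  · simpa [f, map_mul] using congrArg f hB

end SimultaneouslySimilar

end SimultaneousSimilarity

section Blocks

variable {R : Type*} [CommRing R] {k n : Type*} [Fintype k] [Fintype n]

theorem toBlocks₁₁_mul {l₁ l₂ m₁ m₂ o₁ o₂ : Type*} [Fintype m₁] [Fintype m₂]
    (M : Matrix (l₁ ⊕ l₂) (m₁ ⊕ m₂) R) (N : Matrix (m₁ ⊕ m₂) (o₁ ⊕ o₂) R) :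
    (M * N).toBlocks₁₁ = M.toBlocks₁₁ * N.toBlocks₁₁ + M.toBlocks₁₂ * N.toBlocks₂₁ := by
  rw [← fromBlocks_toBlocks M, ← fromBlocks_toBlocks N, fromBlocks_multiply]
  simp only [toBlocks_fromBlocks₁₁, toBlocks_fromBlocks₁₂, toBlocks_fromBlocks₂₁]

theorem toBlocks₁₂_mul_eq_of_fromBlocks_mul_eq {P : Matrix k k R} {A A' : Matrix n n R}
    {T : Matrix (k ⊕ n) (k ⊕ n) R}
    (h : T * fromBlocks P 0 0 A = fromBlocks P 0 0 A' * T) :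
    T.toBlocks₁₂ * A = P * T.toBlocks₁₂ := by
  rw [← fromBlocks_toBlocks T] at h
  simpa [fromBlocks_multiply] using congrArg toBlocks₁₂ h

theorem commute_fromBlocks_one [DecidableEq k] [DecidableEq n] {P : Matrix k k R}
    {A : Matrix n n R} {U : Matrix k n R} (h : U * A = P * U) :
    Commute (fromBlocks P 0 0 A) (fromBlocks 1 U 0 1) := by
  simp [Commute, SemiconjBy, fromBlocks_multiply, h]

theorem intertwines_schurComplement [DecidableEq k] {P : Matrix k k R} {A A' : Matrix n n R}
    {c : Matrix k k R} {u : Matrix k n R} {v : Matrix n k R} {f : Matrix n n R} [Invertible c]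
    (h : fromBlocks P 0 0 A * fromBlocks c u v f = fromBlocks c u v f * fromBlocks P 0 0 A') :
    A * (f - v * ⅟c * u) = (f - v * ⅟c * u) * A' := by
  simp only [fromBlocks_multiply, fromBlocks_inj, Matrix.zero_mul, Matrix.mul_zero, add_zero,
    zero_add] at h
  obtain ⟨hPc, hPu, hAv, hAf⟩ := h
  have hPc' : P * ⅟c = ⅟c * P := (Commute.invOf_right hPc).eq
  have hAvcu : A * (v * ⅟c * u) = v * ⅟c * u * A' := by
    rw [← Matrix.mul_assoc, ← Matrix.mul_assoc, hAv, Matrix.mul_assoc v P, hPc',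
      ← Matrix.mul_assoc, Matrix.mul_assoc _ P u, hPu]
    simp only [Matrix.mul_assoc]
  rw [Matrix.mul_sub, Matrix.sub_mul, hAf, hAvcu]

theorem SimultaneouslySimilar.of_fromBlocks_of_isUnit_toBlocks₁₁ [DecidableEq k]
    [DecidableEq n] {P Q : Matrix k k R} {A B A' B' : Matrix n n R}
    {S : Matrix (k ⊕ n) (k ⊕ n) R} (hS : IsUnit S) (hc : IsUnit S.toBlocks₁₁)
    (hA : Matrix.fromBlocks P 0 0 A * S = S * Matrix.fromBlocks P 0 0 A')
    (hB : Matrix.fromBlocks Q 0 0 B * S = S * Matrix.fromBlocks Q 0 0 B') :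
    SimultaneouslySimilar A B A' B' := by
  have := hc.invertible
  rw [← fromBlocks_toBlocks S] at hS hA hB
  refine ⟨_, ?_, intertwines_schurComplement hA, intertwines_schurComplement hB⟩
  rw [isUnit_iff_isUnit_det, det_fromBlocks₁₁] at hS
  rw [isUnit_iff_isUnit_det]
  exact isUnit_of_mul_isUnit_right hS

end Blocks

section Reindex

variable {R : Type*} [Semiring R] {n : Type*}

def finSuccSumEquiv (k : ℕ) (n : Type*) : Fin (k + 1) ⊕ n ≃ Unit ⊕ (Fin k ⊕ n) :=
  ((finSuccEquiv k |>.trans (Equiv.optionEquivSumPUnit _) |>.trans (Equiv.sumComm _ _)).sumCongr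
    (Equiv.refl n)).trans (Equiv.sumAssoc _ _ _)

theorem reindex_finSuccSumEquiv_fromBlocks_smul_one (k : ℕ) (a : R) (D : Matrix n n R) :
    reindex (finSuccSumEquiv k n) (finSuccSumEquiv k n) (fromBlocks (a • 1) 0 0 D) =
      fromBlocks (a • 1) 0 0 (fromBlocks (a • 1) 0 0 D) := by
  ext (_ | i | i) (_ | j | j) <;>
    simp [finSuccSumEquiv, one_apply, Fin.succ_ne_zero, (Fin.succ_ne_zero _).symm]

theorem reindex_emptySum_fromBlocks (X : Matrix (Fin 0) (Fin 0) R) (D : Matrix n n R) :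
    reindex (Equiv.emptySum (Fin 0) n) (Equiv.emptySum (Fin 0) n) (fromBlocks X 0 0 D) = D := by
  ext i j
  simp

end Reindex

section Cancellation

variable {F : Type*} [Field F] {n : Type*} [Fintype n] [DecidableEq n]

theorem exists_intertwiner_isUnit_toBlocks₁₁ {P Q : Matrix Unit Unit F}
    {A B A' B' : Matrix n n F} {S : Matrix (Unit ⊕ n) (Unit ⊕ n) F} (hS : IsUnit S)
    (hA : fromBlocks P 0 0 A * S = S * fromBlocks P 0 0 A')
    (hB : fromBlocks Q 0 0 B * S = S * fromBlocks Q 0 0 B') :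
    ∃ S' : Matrix (Unit ⊕ n) (Unit ⊕ n) F, IsUnit S' ∧ IsUnit S'.toBlocks₁₁ ∧
      fromBlocks P 0 0 A * S' = S' * fromBlocks P 0 0 A' ∧
      fromBlocks Q 0 0 B * S' = S' * fromBlocks Q 0 0 B' := by
  by_cases hc : IsUnit S.toBlocks₁₁
  · exact ⟨S, hS, hc, hA, hB⟩
  set u' := S⁻¹.toBlocks₁₂
  set E : Matrix (Unit ⊕ n) (Unit ⊕ n) F := fromBlocks 1 u' 0 1
  have hEA := commute_fromBlocks_one
    (toBlocks₁₂_mul_eq_of_fromBlocks_mul_eq (inv_mul_eq_mul_inv_of_mul_eq hS hA))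
  have hEB := commute_fromBlocks_one
    (toBlocks₁₂_mul_eq_of_fromBlocks_mul_eq (inv_mul_eq_mul_inv_of_mul_eq hS hB))
  have hE : IsUnit E := by simp [E, isUnit_iff_isUnit_det]
  have hc0 : S.toBlocks₁₁ = 0 := by
    ext ⟨⟩ ⟨⟩
    simpa [isUnit_iff_isUnit_det] using hc
  have hu'v : u' * S.toBlocks₂₁ = 1 := by
    have := congrArg toBlocks₁₁ (nonsing_inv_mul S ((isUnit_iff_isUnit_det S).mp hS))
    rwa [toBlocks₁₁_mul, hc0, Matrix.mul_zero, zero_add, ← fromBlocks_one,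
      toBlocks_fromBlocks₁₁] at this
  refine ⟨E * S, hE.mul hS, ?_, ?_, ?_⟩
  · simp [E, toBlocks₁₁_mul, hc0, hu'v]
  · rw [← Matrix.mul_assoc, hEA.eq, Matrix.mul_assoc, hA, Matrix.mul_assoc]
  · rw [← Matrix.mul_assoc, hEB.eq, Matrix.mul_assoc, hB, Matrix.mul_assoc]

theorem SimultaneouslySimilar.of_fromBlocks_unit {P Q : Matrix Unit Unit F}
    {A B A' B' : Matrix n n F}
    (h : SimultaneouslySimilar (Matrix.fromBlocks P 0 0 A) (Matrix.fromBlocks Q 0 0 B)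
      (Matrix.fromBlocks P 0 0 A') (Matrix.fromBlocks Q 0 0 B')) :
    SimultaneouslySimilar A B A' B' := by
  obtain ⟨S, hS, hA, hB⟩ := h
  obtain ⟨S', hS', hc, hA', hB'⟩ := exists_intertwiner_isUnit_toBlocks₁₁ hS hA hB
  exact of_fromBlocks_of_isUnit_toBlocks₁₁ hS' hc hA' hB'

theorem SimultaneouslySimilar.of_fromBlocks_smul_one {k : ℕ} {p q : F}
    {A B A' B' : Matrix n n F}
    (h : SimultaneouslySimilar (Matrix.fromBlocks (p • (1 : Matrix (Fin k) (Fin k) F)) 0 0 A)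
      (Matrix.fromBlocks (q • 1) 0 0 B) (Matrix.fromBlocks (p • 1) 0 0 A')
      (Matrix.fromBlocks (q • 1) 0 0 B')) :
    SimultaneouslySimilar A B A' B' := by
  induction k generalizing n with
  | zero => simpa only [reindex_emptySum_fromBlocks] using h.reindex (Equiv.emptySum _ _)
  | succ k ih =>
    refine ih (of_fromBlocks_unit (P := p • 1) (Q := q • 1) ?_)
    simpa only [reindex_finSuccSumEquiv_fromBlocks_smul_one] using
      h.reindex (finSuccSumEquiv k n)

end Cancellation

section Charpoly

variable {R : Type*} [CommRing R] {k n : Type*} [Fintype k] [Fintype n] [DecidableEq k]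
  [DecidableEq n]

theorem charpoly_smul_one (a : R) :
    (a • (1 : Matrix n n R)).charpoly = (X - C a) ^ Fintype.card n := by
  rw [smul_one_eq_diagonal, charpoly_diagonal, Finset.prod_const, Finset.card_univ]

theorem charpoly_inv_mul_mul {S : Matrix n n R} (hS : IsUnit S) (X : Matrix n n R) :
    (S⁻¹ * X * S).charpoly = X.charpoly := by
  simpa using charpoly_units_conj' hS.unit X

theorem roots_charpoly_fromBlocks_smul_one [IsDomain R] (a : R) (D : Matrix n n R) :
    (fromBlocks (a • (1 : Matrix k k R)) 0 0 D).charpoly.roots =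
      Fintype.card k • {a} + D.charpoly.roots := by
  rw [charpoly_fromBlocks_zero₁₂, roots_mul ((charpoly_monic _).mul (charpoly_monic _)).ne_zero,
    charpoly_smul_one, roots_pow, roots_X_sub_C]

end Charpoly

end Matrix

section Pencil

variable {F : Type*} [Field F] {m : ℕ}

theorem smul_M1_add_smul_M2 (x y l : F) (A B : Matrix (Fin m) (Fin m) F) :
    x • M1 A + y • M2 l B =
      fromBlocks (x • 1) 0 0 (fromBlocks (y • 1) 0 0
        (fromBlocks ((x + y * l) • 1) 0 0 (x • A + y • B))) := by
  simp only [M1, M2, fromBlocks_smul, fromBlocks_add, smul_zero, add_zero, zero_add, smul_smul,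
    add_smul]

theorem roots_charpoly_smul_M1_add_smul_M2 (x y l : F) (A B : Matrix (Fin m) (Fin m) F) :
    (x • M1 A + y • M2 l B).charpoly.roots =
      (2 * m + 2) • {x} + ((3 * m + 3) • {y} + ((m + 1) • {x + y * l} +
        (x • A + y • B).charpoly.roots)) := by
  simp only [smul_M1_add_smul_M2, roots_charpoly_fromBlocks_smul_one, Fintype.card_fin]

theorem eq_of_roots_charpoly_smul_M1_add_smul_M2_eq {l x y x' y' : F} (hl : l ≠ 0)
    (hx'y' : x' = 1 ∧ y' = 0 ∨ x' = 0 ∧ y' = 1) {A B A' B' : Matrix (Fin m) (Fin m) F}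
    (h : (x • M1 A + y • M2 l B).charpoly.roots = (x' • M1 A' + y' • M2 l B').charpoly.roots) :
    x = x' ∧ y = y' := by
  classical
  have hcount (t : F) := congrArg (Multiset.count t) h
  simp only [roots_charpoly_smul_M1_add_smul_M2, Multiset.count_add, Multiset.count_nsmul,
    Multiset.count_singleton] at hcount
  have hbound (C : Matrix (Fin m) (Fin m) F) (t : F) : C.charpoly.roots.count t ≤ m :=
    calc C.charpoly.roots.count t ≤ Multiset.card C.charpoly.roots := Multiset.count_le_card _ _
      _ ≤ C.charpoly.natDegree := card_roots' _
      _ = m := by rw [charpoly_natDegree_eq_dim, Fintype.card_fin]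
  -- Only the multiplicities at `x`, `y`, `0` and `1` are needed: there the blocks of sizes
  -- `2m+2` and `3m+3` outweigh the at most `m` roots coming from `A` and `B`.
  have := hcount x; have := hcount y; have := hcount 0; have := hcount 1
  have := hbound (x • A + y • B) x; have := hbound (x • A + y • B) y
  have := hbound (x • A + y • B) 0; have := hbound (x • A + y • B) 1
  have := hbound (x' • A' + y' • B') x; have := hbound (x' • A' + y' • B') y
  have := hbound (x' • A' + y' • B') 0; have := hbound (x' • A' + y' • B') 1
  grind

theorem simultaneouslySimilar_M1_M2_iff (l : F) {A B A' B' : Matrix (Fin m) (Fin m) F} :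
    SimultaneouslySimilar (M1 A) (M2 l B) (M1 A') (M2 l B') ↔
      SimultaneouslySimilar A B A' B' := by
  constructor
  · have hM1 (C : Matrix (Fin m) (Fin m) F) : M1 C = fromBlocks ((1 : F) • 1) 0 0
        (fromBlocks ((0 : F) • 1) 0 0 (fromBlocks ((1 : F) • 1) 0 0 C)) := by
      simp [M1]
    have hM2 (C : Matrix (Fin m) (Fin m) F) : M2 l C = fromBlocks ((0 : F) • 1) 0 0
        (fromBlocks ((1 : F) • 1) 0 0 (fromBlocks (l • 1) 0 0 C)) := by
      simp [M2]
    rw [hM1, hM1, hM2, hM2]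
    exact fun h => h.of_fromBlocks_smul_one.of_fromBlocks_smul_one.of_fromBlocks_smul_one
  · intro h
    exact (SimultaneouslySimilar.refl _ _).fromBlocks
      ((SimultaneouslySimilar.refl _ _).fromBlocks ((SimultaneouslySimilar.refl _ _).fromBlocks h))

theorem weaklySimilar_M1_M2_iff {l : F} (hl : l ≠ 0) {A B A' B' : Matrix (Fin m) (Fin m) F} :
    WeaklySimilar (M1 A) (M2 l B) (M1 A') (M2 l B') ↔
      SimultaneouslySimilar (M1 A) (M2 l B) (M1 A') (M2 l B') := by
  rw [simultaneouslySimilar_iff]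
  constructor
  · rintro ⟨S, α, β, γ, δ, hS, -, h₁, h₂⟩
    obtain ⟨rfl, rfl⟩ : α = 1 ∧ β = 0 := by
      refine eq_of_roots_charpoly_smul_M1_add_smul_M2_eq hl (.inl ⟨rfl, rfl⟩)
        (A := A) (B := B) (A' := A') (B' := B') ?_
      rw [← charpoly_inv_mul_mul hS, h₁, one_smul, zero_smul, add_zero]
    obtain ⟨rfl, rfl⟩ : γ = 0 ∧ δ = 1 := by
      refine eq_of_roots_charpoly_smul_M1_add_smul_M2_eq hl (.inr ⟨rfl, rfl⟩)
        (A := A) (B := B) (A' := A') (B' := B') ?_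
      rw [← charpoly_inv_mul_mul hS, h₂, one_smul, zero_smul, zero_add]
    simp only [one_smul, zero_smul, add_zero, zero_add] at h₁ h₂
    exact ⟨S, hS, h₁, h₂⟩
  · rintro ⟨S, hS, h₁, h₂⟩
    refine ⟨S, 1, 0, 0, 1, hS, by simp [← one_fin_two], ?_, ?_⟩ <;> simpa

end Pencil

theorem similar_iff_M_weaklySimilar_general (F : Type*) [Field F] (l : F) (hl : l ≠ 0)
    (m : ℕ) (A B A' B' : Matrix (Fin m) (Fin m) F) :
    (∃ S : Matrix (Fin m) (Fin m) F, IsUnit S ∧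
        S⁻¹ * A * S = A' ∧ S⁻¹ * B * S = B') ↔
      WeaklySimilar (M1 A) (M2 l B) (M1 A') (M2 l B') := by
  rw [weaklySimilar_M1_M2_iff hl, simultaneouslySimilar_M1_M2_iff, simultaneouslySimilar_iff]

/-- For `λ ≠ 0`, the pairs `(A, B)` and `(A', B')` of `m × m` matrices are
similar if and only if the pairs `(M₁(A), M₂(B))` and `(M₁(A'), M₂(B'))` of
`(7m+6) × (7m+6)` matrices are weakly similar. -/
theorem similar_iff_M_weaklySimilar (F : Type*) [Field F] (l : F) (hl : l ≠ 0)
    (m : ℕ) (hm : 1 ≤ m) (A B A' B' : Matrix (Fin m) (Fin m) F) :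
    (∃ S : Matrix (Fin m) (Fin m) F, IsUnit S ∧
        S⁻¹ * A * S = A' ∧ S⁻¹ * B * S = B') ↔
      WeaklySimilar (M1 A) (M2 l B) (M1 A') (M2 l B') :=
  similar_iff_M_weaklySimilar_general F l hl m A B A' B'
end

section
/- Let F be a field, and let V ⊆ F^{n×n} and V' ⊆ F^{n'×n'} be linear subspaces of pairwise commuting matrices, each containing a nonsingular matrix. If the Lie algebras L(V) and L(V') are isomorphic, then n = n' and there exists a nonsingular n×n matrix S over F with SVS^{-1} = V' (i.e., {SAS^{-1} : A ∈ V} = V'). -/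
/-! The derived algebra of `L(V)` is `{(0|c)}`: brackets have zero block part, and an invertible
`A₀ ∈ V` gives `(0|c) = ⁅(A₀|0), (0|A₀⁻¹c)⁆`. A Lie isomorphism `φ` therefore restricts to a
linear isomorphism `θ : Fⁿ ≃ Fⁿ'`, so `n = n'`. Applying `φ` to `⁅(A|0), (0|b)⁆ = (0|Ab)` gives
`θ A = A' θ` with `A' ∈ V'` the block part of `φ(A|0)`; hence the matrix of `θ` conjugates `V`
into `V'`, and its inverse conjugates `V'` into `V`. -/

/-- The `(n+1) × (n+1)` matrix `(A|a)` whose top-left `n × n` block is `A`,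
whose last column has the entries of the vector `a` followed by `0`, and whose
last row is zero.  Rows and columns are indexed by `Fin n ⊕ Fin 1`. -/
def Mext {F : Type*} [Field F] {n : ℕ} (A : Matrix (Fin n) (Fin n) F)
    (a : Fin n → F) : Matrix (Fin n ⊕ Fin 1) (Fin n ⊕ Fin 1) F :=
  Matrix.fromBlocks A (Matrix.of fun i _ => a i) 0 0

theorem Mext_add {F : Type*} [Field F] {n : ℕ}
    (A B : Matrix (Fin n) (Fin n) F) (a b : Fin n → F) :
    Mext A a + Mext B b = Mext (A + B) (a + b) := by
  ext (i | i) (j | j) <;>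
    simp [Mext, Matrix.fromBlocks, Matrix.add_apply]

theorem Mext_smul {F : Type*} [Field F] {n : ℕ} (c : F)
    (A : Matrix (Fin n) (Fin n) F) (a : Fin n → F) :
    c • Mext A a = Mext (c • A) (c • a) := by
  ext (i | i) (j | j) <;>
    simp [Mext, Matrix.fromBlocks, Matrix.smul_apply]

theorem Mext_mul {F : Type*} [Field F] {n : ℕ}
    (A B : Matrix (Fin n) (Fin n) F) (a b : Fin n → F) :
    Mext A a * Mext B b = Mext (A * B) (A.mulVec b) := by
  ext (i | i) (j | j) <;>
    simp [Mext, Matrix.mul_apply, Fintype.sum_sum_type,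
      Matrix.fromBlocks, Matrix.mulVec, dotProduct]

/-- The set `Ṽ` of all `(n+1) × (n+1)` matrices `(A|a)` with `A ∈ V`,
`a ∈ Fⁿ`. -/
def VtSet {F : Type*} [Field F] {n : ℕ}
    (V : Submodule F (Matrix (Fin n) (Fin n) F)) :
    Set (Matrix (Fin n ⊕ Fin 1) (Fin n ⊕ Fin 1) F) :=
  {M | ∃ A ∈ V, ∃ a : Fin n → F, M = Mext A a}

attribute [local instance] LieRing.ofAssociativeRing

/-- For a subspace `V` of pairwise commuting `n × n` matrices, the Lie algebra
`L(V) = Ṽ` of all matrices `(A|a)` (`A ∈ V`, `a ∈ Fⁿ`), a Lie subalgebra of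
the `(n+1) × (n+1)` matrices with the commutator bracket. -/
def LV {F : Type*} [Field F] {n : ℕ}
    (V : Submodule F (Matrix (Fin n) (Fin n) F))
    (hV : ∀ A ∈ V, ∀ B ∈ V, A * B = B * A) :
    LieSubalgebra F (Matrix (Fin n ⊕ Fin 1) (Fin n ⊕ Fin 1) F) where
  carrier := VtSet V
  add_mem' := by
    rintro x y ⟨A, hA, a, rfl⟩ ⟨B, hB, b, rfl⟩
    exact ⟨A + B, V.add_mem hA hB, a + b, Mext_add A B a b⟩
  zero_mem' := by
    refine ⟨0, V.zero_mem, 0, ?_⟩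
    ext (i | i) (j | j) <;> simp [Mext, Matrix.fromBlocks]
  smul_mem' := by
    rintro c x ⟨A, hA, a, rfl⟩
    exact ⟨c • A, V.smul_mem c hA, c • a, Mext_smul c A a⟩
  lie_mem' := by
    rintro x y ⟨A, hA, a, rfl⟩ ⟨B, hB, b, rfl⟩
    refine ⟨0, V.zero_mem, A.mulVec b - B.mulVec a, ?_⟩
    rw [Ring.lie_def, Mext_mul, Mext_mul, hV A hA B hB]
    ext (i | i) (j | j) <;>
      simp [Mext, Matrix.fromBlocks, Matrix.sub_apply, Pi.sub_apply]

namespace LV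

open Matrix

variable {F : Type*} [Field F] {n : ℕ}

theorem Mext_sub (A B : Matrix (Fin n) (Fin n) F) (a b : Fin n → F) :
    Mext A a - Mext B b = Mext (A - B) (a - b) := by
  ext (i | i) (j | j) <;> simp [Mext, Matrix.fromBlocks]

theorem lie_Mext (A B : Matrix (Fin n) (Fin n) F) (a b : Fin n → F) :
    ⁅Mext A a, Mext B b⁆ = Mext (A * B - B * A) (A *ᵥ b - B *ᵥ a) := by
  rw [Ring.lie_def, Mext_mul, Mext_mul, Mext_sub]

def vecPart : Matrix (Fin n ⊕ Fin 1) (Fin n ⊕ Fin 1) F →ₗ[F] Fin n → F where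
  toFun M i := M (.inl i) (.inr 0)
  map_add' _ _ := rfl
  map_smul' _ _ := rfl

@[simp]
theorem vecPart_Mext (A : Matrix (Fin n) (Fin n) F) (a : Fin n → F) :
    vecPart (Mext A a) = a := rfl

variable {V : Submodule F (Matrix (Fin n) (Fin n) F)} {hV : ∀ A ∈ V, ∀ B ∈ V, A * B = B * A}

variable (V hV) in
def ofVec : (Fin n → F) →ₗ[F] LV V hV where
  toFun a := ⟨Mext 0 a, 0, V.zero_mem, a, rfl⟩
  map_add' a b := Subtype.ext <| by simp [Mext_add]
  map_smul' c a := Subtype.ext <| by simp [Mext_smul]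

@[simp]
theorem coe_ofVec (a : Fin n → F) : (ofVec V hV a : Matrix _ _ F) = Mext 0 a := rfl

theorem ofVec_injective : Function.Injective (ofVec V hV) := fun a b h => by
  simpa using congrArg (vecPart ∘ Subtype.val) h

theorem lie_ofVec {x : LV V hV} {A : Matrix (Fin n) (Fin n) F} {a : Fin n → F}
    (hx : (x : Matrix _ _ F) = Mext A a) (b : Fin n → F) :
    ⁅x, ofVec V hV b⁆ = ofVec V hV (A *ᵥ b) :=
  Subtype.ext <| by simp [hx, lie_Mext]

theorem exists_lie_eq_ofVec (x y : LV V hV) : ∃ c, ⁅x, y⁆ = ofVec V hV c := by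
  obtain ⟨A, hA, a, hx⟩ := x.2
  obtain ⟨B, hB, b, hy⟩ := y.2
  exact ⟨A *ᵥ b - B *ᵥ a, Subtype.ext <| by
    rw [LieSubalgebra.coe_bracket, hx, hy, lie_Mext, hV A hA B hB, sub_self, coe_ofVec]⟩

theorem exists_lie_eq_ofVec_of_isUnit (hns : ∃ A ∈ V, IsUnit A) (c : Fin n → F) :
    ∃ x y : LV V hV, ⁅x, y⁆ = ofVec V hV c := by
  obtain ⟨A₀, hA₀, hunit⟩ := hns
  refine ⟨⟨Mext A₀ 0, A₀, hA₀, 0, rfl⟩, ofVec V hV (A₀⁻¹ *ᵥ c), ?_⟩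
  rw [lie_ofVec rfl, mulVec_mulVec, mul_nonsing_inv _ ((isUnit_iff_isUnit_det _).1 hunit),
    one_mulVec]

variable {n' : ℕ} {V' : Submodule F (Matrix (Fin n') (Fin n') F)}
  {hV' : ∀ A ∈ V', ∀ B ∈ V', A * B = B * A}

theorem exists_map_ofVec_eq_ofVec (hns : ∃ A ∈ V, IsUnit A)
    (φ : LV V hV ≃ₗ⁅F⁆ LV V' hV') (a : Fin n → F) :
    ∃ a', φ (ofVec V hV a) = ofVec V' hV' a' := by
  obtain ⟨x, y, hxy⟩ := exists_lie_eq_ofVec_of_isUnit hns a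
  rw [← hxy, LieEquiv.map_lie]
  exact exists_lie_eq_ofVec _ _

def vecMap (φ : LV V hV ≃ₗ⁅F⁆ LV V' hV') : (Fin n → F) →ₗ[F] Fin n' → F :=
  vecPart ∘ₗ (LV V' hV').toSubmodule.subtype ∘ₗ φ.toLinearMap ∘ₗ ofVec V hV

theorem map_ofVec (hns : ∃ A ∈ V, IsUnit A) (φ : LV V hV ≃ₗ⁅F⁆ LV V' hV')
    (a : Fin n → F) :
    φ (ofVec V hV a) = ofVec V' hV' (vecMap φ a) := by
  obtain ⟨a', h⟩ := exists_map_ofVec_eq_ofVec hns φ a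
  simp [vecMap, h]

theorem vecMap_symm_vecMap (hns : ∃ A ∈ V, IsUnit A) (hns' : ∃ A ∈ V', IsUnit A)
    (φ : LV V hV ≃ₗ⁅F⁆ LV V' hV') (a : Fin n → F) : vecMap φ.symm (vecMap φ a) = a :=
  ofVec_injective <| by
    rw [← map_ofVec hns' φ.symm, ← map_ofVec hns φ, LieEquiv.symm_apply_apply]

theorem vecMap_vecMap_symm (hns : ∃ A ∈ V, IsUnit A) (hns' : ∃ A ∈ V', IsUnit A)
    (φ : LV V hV ≃ₗ⁅F⁆ LV V' hV') (a : Fin n' → F) : vecMap φ (vecMap φ.symm a) = a :=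
  vecMap_symm_vecMap hns' hns φ.symm a

theorem eq_of_lieEquiv (hns : ∃ A ∈ V, IsUnit A) (hns' : ∃ A ∈ V', IsUnit A)
    (φ : LV V hV ≃ₗ⁅F⁆ LV V' hV') : n = n' := by
  simpa using (LinearEquiv.ofLinearMap (f := vecMap φ) (g := vecMap φ.symm)
    (LinearMap.ext (vecMap_vecMap_symm hns hns' φ))
    (LinearMap.ext (vecMap_symm_vecMap hns hns' φ))).finrank_eq

theorem toMatrix'_vecMap_mul_toMatrix'_vecMap_symm (hns : ∃ A ∈ V, IsUnit A)
    (hns' : ∃ A ∈ V', IsUnit A) (φ : LV V hV ≃ₗ⁅F⁆ LV V' hV') :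
    (vecMap φ).toMatrix' * (vecMap φ.symm).toMatrix' = 1 := by
  rw [← LinearMap.toMatrix'_comp, ← LinearMap.toMatrix'_id]
  exact congrArg _ (LinearMap.ext (vecMap_vecMap_symm hns hns' φ))

theorem exists_toMatrix'_vecMap_mul_eq (hns : ∃ A ∈ V, IsUnit A)
    (φ : LV V hV ≃ₗ⁅F⁆ LV V' hV') {A : Matrix (Fin n) (Fin n) F} (hA : A ∈ V) :
    ∃ A' ∈ V', (vecMap φ).toMatrix' * A = A' * (vecMap φ).toMatrix' := by
  let x : LV V hV := ⟨Mext A 0, A, hA, 0, rfl⟩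
  obtain ⟨A', hA', a', hφx⟩ := (φ x).2
  refine ⟨A', hA', toLin'.injective (LinearMap.ext fun b => ?_)⟩
  have h := congrArg φ (lie_ofVec (x := x) rfl b)
  rw [LieEquiv.map_lie, map_ofVec hns, map_ofVec hns, lie_ofVec hφx] at h
  simpa [toLin'_mul] using (ofVec_injective h).symm

end LV

theorem Matrix.image_conj_eq_of_mul_eq_one {m R : Type*} [Fintype m] [DecidableEq m]
    [CommRing R] {S T : Matrix m m R} {V V' : Set (Matrix m m R)} (hST : S * T = 1)
    (h : ∀ A ∈ V, ∃ A' ∈ V', S * A = A' * S) (h' : ∀ A' ∈ V', ∃ A ∈ V, T * A' = A * T) :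
    (fun A => S * A * S⁻¹) '' V = V' := by
  rw [inv_eq_right_inv hST]
  ext B
  constructor
  · rintro ⟨A, hA, rfl⟩
    obtain ⟨A', hA', hSA⟩ := h A hA
    show S * A * T ∈ V'
    rwa [hSA, mul_assoc, hST, mul_one]
  · intro hB
    obtain ⟨A, hA, hTB⟩ := h' B hB
    exact ⟨A, hA, by dsimp only; rw [mul_assoc, ← hTB, ← mul_assoc, hST, one_mul]⟩

/-- If the Lie algebras `L(V)` and `L(V')` of two subspaces of pairwise
commuting matrices, each containing a nonsingular matrix, are isomorphic, then
`n = n'` and `V` and `V'` are similar: `SVS⁻¹ = V'` for some nonsingular `S`. -/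
theorem LV_iso_implies_similar (F : Type*) [Field F] (n n' : ℕ)
    (V : Submodule F (Matrix (Fin n) (Fin n) F))
    (V' : Submodule F (Matrix (Fin n') (Fin n') F))
    (hV : ∀ A ∈ V, ∀ B ∈ V, A * B = B * A)
    (hV' : ∀ A ∈ V', ∀ B ∈ V', A * B = B * A)
    (hns : ∃ A ∈ V, IsUnit A) (hns' : ∃ A ∈ V', IsUnit A)
    (hiso : Nonempty ((LV V hV) ≃ₗ⁅F⁆ (LV V' hV'))) :
    ∃ h : n = n', ∃ S : Matrix (Fin n') (Fin n') F, IsUnit S ∧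
      (fun A => S * (Matrix.reindex (finCongr h) (finCongr h) A) * S⁻¹) '' ↑V
        = (↑V' : Set (Matrix (Fin n') (Fin n') F)) := by
  obtain ⟨φ⟩ := hiso
  obtain rfl : n = n' := LV.eq_of_lieEquiv hns hns' φ
  have hST := LV.toMatrix'_vecMap_mul_toMatrix'_vecMap_symm hns hns' φ
  refine ⟨rfl, _, IsUnit.of_mul_eq_one _ hST, ?_⟩
  simp only [finCongr_refl, Matrix.reindex_refl_refl]
  exact Matrix.image_conj_eq_of_mul_eq_one hST
    (fun A hA => LV.exists_toMatrix'_vecMap_mul_eq hns φ hA)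
    (fun A hA => LV.exists_toMatrix'_vecMap_mul_eq hns' φ.symm hA)
end
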